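/- If F ⊆ 2^[n] has VC-dimension less than d, then ℓ(F) < 2d, where ℓ(F) = Σ_{A∈F} 1/C(n,|A|). -/

import Mathlib

/-!
Put `C = C(n, e)` with `2e ≤ n`, where `e` bounds the VC-dimension. Every set `A` contributes
`1 / C(n, |A|) ≤ 1 / C + (1 / C(n, |A|) - 1 / C)⁺`, and the positive parts vanish on the middle
levels `e ≤ |A| ≤ n - e`, so summed over all of `2^[n]` they give `2 (e - Σ_{k<e} C(n,k) / C)`.
The Sauer–Shelah bound `|F| ≤ Σ_{k ≤ e} C(n, k)` makes `|F| / C ≤ Σ_{k<e} C(n,k) / C + 1`, hence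
`ℓ(F) ≤ 2e + 1`. When `n < 2e` the trivial bound `ℓ(F) ≤ ℓ(2^[n]) = n + 1` suffices.
-/

open Finset

namespace Nat

lemma choose_le_choose_of_le_of_two_mul_le {n r s : ℕ} (hrs : r ≤ s) (hs : 2 * s ≤ n) :
    n.choose r ≤ n.choose s := by
  induction hrs with
  | refl => rfl
  | step hrs ih =>
    exact (ih (by omega)).trans (choose_le_succ_of_lt_half_left (by omega))

lemma choose_le_choose_of_le_of_add_le {n r s : ℕ} (hrs : r ≤ s) (hn : r + s ≤ n) :
    n.choose r ≤ n.choose s := by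
  rcases le_or_gt (2 * s) n with hs | hs
  · exact choose_le_choose_of_le_of_two_mul_le hrs hs
  · rw [← choose_symm (by omega : s ≤ n)]
    exact choose_le_choose_of_le_of_two_mul_le (by omega) (by omega)

/-- The deficits `C(n,e) - C(n,j)` (truncated) vanish for `e ≤ j ≤ n - e` and are symmetric
under `j ↦ n - j`. -/
lemma sum_range_choose_sub_choose {n e : ℕ} (he : 2 * e ≤ n) :
    ∑ j ∈ range (n + 1), (n.choose e - n.choose j) =
      2 * ∑ k ∈ range e, (n.choose e - n.choose k) := by
  set deficit : ℕ → ℕ := fun j => n.choose e - n.choose j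
  have hmiddle : ∑ j ∈ Ico e (n + 1), deficit j = ∑ j ∈ Ico (n + 1 - e) (n + 1), deficit j := by
    refine (sum_subset (fun j hj => ?_) fun j hj hj' => ?_).symm
    · simp only [mem_Ico] at hj ⊢
      omega
    · simp only [mem_Ico, not_and_or, not_le, not_lt] at hj hj'
      exact Nat.sub_eq_zero_of_le (choose_le_choose_of_le_of_add_le (by omega) (by omega))
  have hupper : ∑ j ∈ Ico (n + 1 - e) (n + 1), deficit j = ∑ k ∈ range e, deficit k := by
    have hreflect := sum_Ico_reflect deficit 0 (by omega : e ≤ n + 1)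
    rw [Nat.sub_zero] at hreflect
    rw [← hreflect, ← range_eq_Ico]
    exact sum_congr rfl fun k hk => by
      simp only [deficit, choose_symm (by simp at hk; omega : k ≤ n)]
  rw [range_eq_Ico, ← sum_Ico_consecutive _ (Nat.zero_le e) (by omega : e ≤ n + 1),
    ← range_eq_Ico, hmiddle, hupper, two_mul]

lemma cast_mul_max_one_div_sub_one_div {b c : ℕ} (hb : 0 < b) (hc : 0 < c) :
    (b : ℝ) * max (1 / (b : ℝ) - 1 / c) 0 = ((c - b : ℕ) : ℝ) / c := by
  have hb' : (0 : ℝ) < b := by exact_mod_cast hb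
  have hc' : (0 : ℝ) < c := by exact_mod_cast hc
  rcases le_or_gt b c with hbc | hbc
  · have : (1 : ℝ) / c ≤ 1 / b := one_div_le_one_div_of_le hb' (by exact_mod_cast hbc)
    rw [max_eq_left (by linarith), cast_sub hbc]
    field_simp
  · have : (1 : ℝ) / b < 1 / c := one_div_lt_one_div_of_lt hc' (by exact_mod_cast hbc)
    rw [max_eq_right (by linarith), Nat.sub_eq_zero_of_le hbc.le]
    simp

end Nat

lemma Finset.sum_le_card_mul_add_sum_max_sub {ι : Type*} [Fintype ι] (s : Finset ι)
    (f : ι → ℝ) (c : ℝ) : ∑ i ∈ s, f i ≤ #s * c + ∑ i, max (f i - c) 0 := by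
  calc ∑ i ∈ s, f i ≤ ∑ i ∈ s, (c + max (f i - c) 0) :=
        sum_le_sum fun i _ => by linarith [le_max_left (f i - c) 0]
    _ = #s * c + ∑ i ∈ s, max (f i - c) 0 := by
        rw [sum_add_distrib, sum_const, nsmul_eq_mul]
    _ ≤ #s * c + ∑ i, max (f i - c) 0 := by
        gcongr
        exact subset_univ s

lemma Finset.card_le_sum_range_choose_add_choose {α : Type*} [Fintype α] [DecidableEq α]
    {F : Finset (Finset α)} {e : ℕ} (hF : F.vcDim ≤ e) :
    #F ≤ ∑ k ∈ range e, (Fintype.card α).choose k + (Fintype.card α).choose e := by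
  calc #F ≤ #F.shatterer := card_le_card_shatterer F
    _ ≤ ∑ k ∈ Iic F.vcDim, (Fintype.card α).choose k := card_shatterer_le_sum_vcDim
    _ ≤ ∑ k ∈ Iic e, (Fintype.card α).choose k :=
        sum_le_sum_of_subset (Iic_subset_Iic.2 hF)
    _ = _ := by rw [← Nat.range_succ_eq_Iic, sum_range_succ]

lemma Finset.sum_univ_apply_card {α : Type*} [Fintype α] (g : ℕ → ℝ) :
    ∑ A : Finset α, g #A =
      ∑ j ∈ range (Fintype.card α + 1), ((Fintype.card α).choose j : ℝ) * g j := by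
  simp only [← powerset_univ, sum_powerset_apply_card, card_univ, nsmul_eq_mul]

variable {α : Type*} [Fintype α]

noncomputable def lubell (F : Finset (Finset α)) : ℝ :=
  ∑ A ∈ F, 1 / ((Fintype.card α).choose #A : ℝ)

lemma lubell_univ : lubell (univ : Finset (Finset α)) = Fintype.card α + 1 := by
  rw [lubell, sum_univ_apply_card fun j => 1 / ((Fintype.card α).choose j : ℝ)]
  rw [sum_congr rfl fun j hj => mul_one_div_cancel (by
    exact_mod_cast (Nat.choose_pos (Nat.lt_succ_iff.1 (mem_range.1 hj))).ne')]
  simp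

lemma lubell_le_card_add_one (F : Finset (Finset α)) : lubell F ≤ Fintype.card α + 1 := by
  rw [← lubell_univ]
  exact sum_le_sum_of_subset_of_nonneg (subset_univ F) fun A _ _ => by positivity

lemma lubell_le_of_vcDim_le_of_two_mul_le [DecidableEq α] {F : Finset (Finset α)} {e : ℕ}
    (hF : F.vcDim ≤ e) (he : 2 * e ≤ Fintype.card α) : lubell F ≤ 2 * e + 1 := by
  have hsauer := card_le_sum_range_choose_add_choose hF
  set n := Fintype.card α
  have hdeficit := Nat.sum_range_choose_sub_choose he
  set C := n.choose e
  have hC : 0 < C := Nat.choose_pos (by omega)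
  have hpositive : ∑ A : Finset α, max (1 / (n.choose #A : ℝ) - 1 / C) 0 =
      ((∑ j ∈ range (n + 1), (C - n.choose j) : ℕ) : ℝ) / C := by
    rw [sum_univ_apply_card fun j => max (1 / (n.choose j : ℝ) - 1 / C) 0, Nat.cast_sum,
      sum_div]
    exact sum_congr rfl fun j hj =>
      Nat.cast_mul_max_one_div_sub_one_div (Nat.choose_pos (by simp at hj; omega)) hC
  have hlevels : ∑ k ∈ range e, n.choose k + ∑ k ∈ range e, (C - n.choose k) = e * C := by
    rw [← sum_add_distrib, sum_congr rfl fun k hk => Nat.add_sub_cancel'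
      (Nat.choose_le_choose_of_le_of_add_le (by simp at hk; omega) (by simp at hk; omega))]
    rw [sum_const, card_range, smul_eq_mul]
  have hcount : #F + ∑ j ∈ range (n + 1), (C - n.choose j) ≤ (2 * e + 1) * C := by
    rw [hdeficit, add_one_mul, mul_assoc, two_mul, two_mul, ← hlevels]
    omega
  calc lubell F ≤ #F * (1 / C) + ∑ A : Finset α, max (1 / (n.choose #A : ℝ) - 1 / C) 0 :=
        sum_le_card_mul_add_sum_max_sub F _ _
    _ = ((#F + ∑ j ∈ range (n + 1), (C - n.choose j) : ℕ) : ℝ) / C := by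
        rw [hpositive]; push_cast; ring
    _ ≤ ((2 * e + 1) * C : ℕ) / C := by gcongr
    _ = 2 * e + 1 := by push_cast; field_simp

lemma lubell_le_of_vcDim_le [DecidableEq α] {F : Finset (Finset α)} {e : ℕ}
    (hF : F.vcDim ≤ e) : lubell F ≤ 2 * e + 1 := by
  rcases le_or_gt (2 * e) (Fintype.card α) with he | he
  · exact lubell_le_of_vcDim_le_of_two_mul_le hF he
  · calc lubell F ≤ Fintype.card α + 1 := lubell_le_card_add_one F
      _ ≤ 2 * e + 1 := by gcongr; exact_mod_cast he.le

/-- If every set shattered by `F ⊆ 2^[n]` has fewer than `d` elements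
(i.e. the VC-dimension of `F` is less than `d`), then `ℓ(F) < 2d`. -/
theorem lubell_lt_of_vc_lt (n d : ℕ) (hd : 0 < d) (F : Finset (Finset (Fin n)))
    (hVC : ∀ R : Finset (Fin n), F.Shatters R → R.card < d) :
    (∑ A ∈ F, (1 : ℝ) / (n.choose A.card)) < 2 * d := by
  obtain ⟨e, rfl⟩ : ∃ e, d = e + 1 := ⟨d - 1, by omega⟩
  have hF : F.vcDim ≤ e :=
    Finset.sup_le fun R hR => Nat.lt_succ_iff.1 (hVC R (mem_shatterer.1 hR))
  have := lubell_le_of_vcDim_le hF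
  simp only [lubell, Fintype.card_fin] at this
  push_cast
  linarith
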